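/- arXiv:1602.00641 — 4 statements merged into one kernel-verified Lean document; each statement's English description precedes it below -/
import Mathlib

section
/- For any permutation σ in the symmetric group S(d), there is exactly one way to write σ as a product of transpositions σ = (s₁ t₁)(s₂ t₂)⋯(s_r t_r) with sᵢ < tᵢ for all i and t₁ < t₂ < ⋯ < t_r (a strictly monotone factorization), and this factorization has length r = d − c(σ), where c(σ) is the number of cycles of σ. -/
/-- A transposition step `(s t)` of `S(d)` recorded with `s < t`; its colour is `t`. -/
def Step (d : ℕ) : Type := {p : Fin d × Fin d // p.1 < p.2}

/-- The permutation (transposition) corresponding to a step. -/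
def stepPerm {d : ℕ} (x : Step d) : Equiv.Perm (Fin d) := Equiv.swap x.1.1 x.1.2

/-- The colour of a step, i.e. the larger of the two interchanged points. -/
def colour {d : ℕ} (x : Step d) : Fin d := x.1.2

/-- Number of cycles of a permutation, including fixed points. -/
def cycleCount {d : ℕ} (σ : Equiv.Perm (Fin d)) : ℕ :=
  d - σ.support.card + σ.cycleType.card

/-!
If `L ++ [(s t)]` is a strictly monotone factorization of `σ`, every factor of `L` fixes all
points `≥ t`; hence `σ` fixes every point above `t`, moves `t`, and sends `s` to `t`. So the
last factor is forced to be `(σ⁻¹ M, M)` with `M` the largest point moved by `σ`, and `L` is a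
strictly monotone factorization of `σ * (s t) = (t σt) * σ`, which moves fewer points: this
gives existence and uniqueness by induction. Multiplying by `(t σt)` splits `t` off its cycle,
so `#support - #cycles`, which equals `d - c(σ)`, drops by exactly one with each factor.
-/

open Equiv Equiv.Perm Finset

namespace Equiv.Perm

variable {α : Type*} [Fintype α] [DecidableEq α]

theorem IsCycle.card_support_swap_mul_add_two {c : Perm α} (hc : c.IsCycle) {x : α}
    (hx : c x ≠ x) :
    #(swap x (c x) * c).support + 2 =
      #c.support + Multiset.card (swap x (c x) * c).cycleType := by
  by_cases hcx : c (c x) = x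
  · have hswap : c = swap x (c x) := hc.eq_swap_of_apply_apply_eq_self hx hcx
    have hone : swap x (c x) * c = 1 := by nth_rewrite 2 [hswap]; exact swap_mul_self _ _
    have htwo : #c.support = 2 := by rw [hswap]; exact card_support_swap hx.symm
    rw [hone, support_one, cycleType_one, htwo]
    rfl
  · have hpos := card_pos.2 ⟨x, mem_support.2 hx⟩
    rw [(hc.swap_mul hx hcx).cycleType, support_swap_mul_eq c x hcx, sdiff_singleton_eq_erase,
      card_erase_of_mem (mem_support.2 hx), Multiset.card_singleton]
    omega

theorem support_swap_apply_mul_le (f : Perm α) (x : α) :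
    (swap x (f x) * f).support ≤ f.support := by
  by_cases hx : f x = x
  · rw [hx, swap_self, ← one_def, one_mul]
  refine (support_mul_le _ _).trans (sup_le ?_ le_rfl)
  rw [support_swap (Ne.symm hx), insert_subset_iff, singleton_subset_iff, apply_mem_support]
  exact ⟨mem_support.2 hx, mem_support.2 hx⟩

theorem card_support_swap_mul_add_card_cycleType {f : Perm α} {x : α} (hx : f x ≠ x) :
    #(swap x (f x) * f).support + Multiset.card f.cycleType + 1 =
      #f.support + Multiset.card (swap x (f x) * f).cycleType := by
  set c := f.cycleOf x
  obtain ⟨r, hr⟩ : ∃ r, r = f * c⁻¹ := ⟨_, rfl⟩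
  have hc : c.IsCycle := f.isCycle_cycleOf hx
  have hcx : c x = f x := f.cycleOf_apply_self x
  have hdisj : Disjoint c r := hr ▸ (disjoint_mul_inv_of_mem_cycleFactorsFinset
    (cycleOf_mem_cycleFactorsFinset_iff.2 (mem_support.2 hx))).symm
  have hf : f = c * r := by rw [hdisj.commute.eq, hr, inv_mul_cancel_right]
  have hswap : swap x (f x) * f = (swap x (c x) * c) * r := by rw [hcx, mul_assoc, ← hf]
  have hdisj' : Disjoint (swap x (c x) * c) r := hdisj.mono (support_swap_apply_mul_le c x) le_rfl
  have key := hc.card_support_swap_mul_add_two (hcx ▸ hx)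
  rw [hswap, hdisj'.cycleType_mul, hdisj'.card_support_mul, hf, hdisj.cycleType_mul,
    hdisj.card_support_mul, hc.cycleType]
  simp only [Multiset.card_add, Multiset.card_singleton]
  omega

end Equiv.Perm

section Factorization

variable {d : ℕ}

def IsStrictMonoFactorization (σ : Perm (Fin d)) (L : List (Step d)) : Prop :=
  (L.map stepPerm).prod = σ ∧ (L.map colour).Pairwise (· < ·)

theorem stepPerm_mul_self (x : Step d) : stepPerm x * stepPerm x = 1 :=
  swap_mul_self _ _

theorem stepPerm_apply_of_colour_lt {x : Step d} {y : Fin d} (h : colour x < y) :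
    stepPerm x y = y :=
  swap_apply_of_ne_of_ne (x.2.trans h).ne' h.ne'

theorem prod_map_stepPerm_apply_of_forall_colour_lt {L : List (Step d)} {y : Fin d}
    (h : ∀ z ∈ L, colour z < y) : (L.map stepPerm).prod y = y := by
  induction L with
  | nil => rfl
  | cons z L ih =>
    have hz : colour z < y := h z List.mem_cons_self
    rw [List.map_cons, List.prod_cons, mul_apply, ih fun w hw => h w (List.mem_cons_of_mem _ hw)]
    exact stepPerm_apply_of_colour_lt hz

theorem isStrictMonoFactorization_nil_iff {σ : Perm (Fin d)} :
    IsStrictMonoFactorization σ [] ↔ σ = 1 := by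
  simp [IsStrictMonoFactorization, eq_comm]

theorem isStrictMonoFactorization_append_singleton_iff {σ : Perm (Fin d)} {L : List (Step d)}
    {x : Step d} :
    IsStrictMonoFactorization σ (L ++ [x]) ↔
      IsStrictMonoFactorization (σ * stepPerm x) L ∧ ∀ z ∈ L, colour z < colour x := by
  have hprod :
      (L.map stepPerm).prod * stepPerm x = σ ↔ (L.map stepPerm).prod = σ * stepPerm x := by
    rw [← mul_left_inj (stepPerm x), mul_assoc, stepPerm_mul_self, mul_one]
  simp [IsStrictMonoFactorization, List.pairwise_append, hprod, and_assoc]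

theorem IsStrictMonoFactorization.isGreatest_colour_last {σ : Perm (Fin d)} {L : List (Step d)}
    {x : Step d} (h : IsStrictMonoFactorization σ (L ++ [x])) :
    IsGreatest (σ.support : Set (Fin d)) (colour x) ∧ σ x.1.1 = colour x := by
  obtain ⟨⟨hprod, -⟩, hlt⟩ := isStrictMonoFactorization_append_singleton_iff.1 h
  set P := (L.map stepPerm).prod
  have hσ : σ = P * stepPerm x := by rw [hprod, mul_assoc, stepPerm_mul_self, mul_one]
  have hfix : ∀ y, colour x ≤ y → P y = y := fun y hy =>
    prod_map_stepPerm_apply_of_forall_colour_lt fun z hz => (hlt z hz).trans_le hy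
  have hleft : σ x.1.1 = colour x := by
    rw [hσ, mul_apply, stepPerm, swap_apply_left]
    exact hfix _ le_rfl
  refine ⟨⟨mem_support.2 fun hfixed => x.2.ne ?_, fun y hy => ?_⟩, hleft⟩
  · exact σ.injective (hleft.trans hfixed.symm)
  · by_contra! hxy
    refine mem_support.1 hy ?_
    rw [hσ, mul_apply, stepPerm_apply_of_colour_lt hxy]
    exact hfix y hxy.le

theorem IsStrictMonoFactorization.ne_one {σ : Perm (Fin d)} {L : List (Step d)} {x : Step d}
    (h : IsStrictMonoFactorization σ (L ++ [x])) : σ ≠ 1 := by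
  rintro rfl
  simpa using h.isGreatest_colour_last.1.1

theorem IsStrictMonoFactorization.last_eq {σ : Perm (Fin d)} {L L' : List (Step d)}
    {x x' : Step d} (h : IsStrictMonoFactorization σ (L ++ [x]))
    (h' : IsStrictMonoFactorization σ (L' ++ [x'])) : x = x' := by
  obtain ⟨hx, hσx⟩ := h.isGreatest_colour_last
  obtain ⟨hx', hσx'⟩ := h'.isGreatest_colour_last
  have hcolour : colour x = colour x' := hx.unique hx'
  exact Subtype.ext (Prod.ext (σ.injective (hσx.trans (hcolour.trans hσx'.symm))) hcolour)

theorem IsStrictMonoFactorization.unique {σ : Perm (Fin d)} {L L' : List (Step d)}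
    (h : IsStrictMonoFactorization σ L) (h' : IsStrictMonoFactorization σ L') : L = L' := by
  induction L using List.reverseRecOn generalizing σ L' with
  | nil =>
    rcases L'.eq_nil_or_concat' with rfl | ⟨L', x', rfl⟩
    · rfl
    · exact absurd (isStrictMonoFactorization_nil_iff.1 h) h'.ne_one
  | append_singleton L x ih =>
    rcases L'.eq_nil_or_concat' with rfl | ⟨L', x', rfl⟩
    · exact absurd (isStrictMonoFactorization_nil_iff.1 h') h.ne_one
    · obtain rfl := h.last_eq h'
      rw [ih (isStrictMonoFactorization_append_singleton_iff.1 h).1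
        (isStrictMonoFactorization_append_singleton_iff.1 h').1]

theorem IsStrictMonoFactorization.colour_lt {σ : Perm (Fin d)} {L : List (Step d)}
    (h : IsStrictMonoFactorization σ L) {m : Fin d} (hm : ∀ y ∈ σ.support, y < m) :
    ∀ z ∈ L, colour z < m := by
  rcases L.eq_nil_or_concat' with rfl | ⟨L, x, rfl⟩
  · simp
  have hx : colour x < m := hm _ h.isGreatest_colour_last.1.1
  intro z hz
  rcases List.mem_append.1 hz with hz | hz
  · exact ((isStrictMonoFactorization_append_singleton_iff.1 h).2 z hz).trans hx
  · rwa [List.mem_singleton.1 hz]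

theorem exists_isStrictMonoFactorization (σ : Perm (Fin d)) :
    ∃ L, IsStrictMonoFactorization σ L := by
  induction hn : #σ.support using Nat.strong_induction_on generalizing σ with
  | _ n ih =>
  rcases σ.support.eq_empty_or_nonempty with hσ | hne
  · exact ⟨[], isStrictMonoFactorization_nil_iff.2 (support_eq_empty_iff.1 hσ)⟩
  set M := σ.support.max' hne
  have hM : M ∈ σ.support := max'_mem _ _
  have hσa : σ (σ⁻¹ M) = M := σ.apply_symm_apply M
  have haM : σ⁻¹ M ≠ M := fun h => mem_support.1 hM (by rwa [h] at hσa)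
  have ha : σ⁻¹ M ∈ σ.support := mem_support.2 (hσa.trans_ne haM.symm)
  let x : Step d := ⟨(σ⁻¹ M, M), (le_max' _ _ ha).lt_of_ne haM⟩
  have hσx : σ * stepPerm x = swap M (σ M) * σ := by
    rw [stepPerm, mul_swap_eq_swap_mul, hσa]
  obtain ⟨L, hL⟩ := ih _ (hn ▸ hσx ▸ card_support_swap_mul (mem_support.1 hM)) _ rfl
  refine ⟨L ++ [x], isStrictMonoFactorization_append_singleton_iff.2 ⟨hL, hL.colour_lt ?_⟩⟩
  intro y hy
  rw [hσx] at hy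
  refine (le_max' _ _ (support_swap_apply_mul_le σ M hy)).lt_of_ne ?_
  intro hyM
  rw [hyM] at hy
  exact mem_support.1 hy (by rw [mul_apply, swap_apply_right])

theorem IsStrictMonoFactorization.length_add_card_cycleType {σ : Perm (Fin d)}
    {L : List (Step d)} (h : IsStrictMonoFactorization σ L) :
    L.length + Multiset.card σ.cycleType = #σ.support := by
  induction L using List.reverseRecOn generalizing σ with
  | nil => simp [isStrictMonoFactorization_nil_iff.1 h]
  | append_singleton L x ih =>
    obtain ⟨⟨hx, -⟩, hσx⟩ := h.isGreatest_colour_last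
    have hσ' : σ * stepPerm x = swap (colour x) (σ (colour x)) * σ := by
      rw [stepPerm, mul_swap_eq_swap_mul, hσx]
      rfl
    have hL := ih (isStrictMonoFactorization_append_singleton_iff.1 h).1
    rw [hσ'] at hL
    have := card_support_swap_mul_add_card_cycleType (mem_support.1 hx)
    rw [List.length_append, List.length_singleton]
    omega

end Factorization

/-- Every permutation of `S(d)` has a unique strictly monotone factorization into
transpositions, and any such factorization has length `d - c(σ)`. -/
theorem stmt0 (d : ℕ) (σ : Equiv.Perm (Fin d)) :
    (∃! L : List (Step d),
      (L.map stepPerm).prod = σ ∧ (L.map colour).Pairwise (· < ·)) ∧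
    (∀ L : List (Step d),
      (L.map stepPerm).prod = σ → (L.map colour).Pairwise (· < ·) →
      L.length = d - cycleCount σ) := by
  refine ⟨?_, fun L hprod hmono => ?_⟩
  · obtain ⟨L, hL⟩ := exists_isStrictMonoFactorization σ
    exact ⟨L, hL, fun L' hL' => IsStrictMonoFactorization.unique hL' hL⟩
  · have hlen := IsStrictMonoFactorization.length_add_card_cycleType ⟨hprod, hmono⟩
    have hsupp : #σ.support ≤ d := by simpa using card_le_univ σ.support
    rw [cycleCount]
    omega
end

section
/- Every orbit of the sorting action of S(r) on Walk_r(ρ,σ) contains exactly one monotone walk, i.e., exactly one tuple whose spectrum (t₁,…,t_r) is weakly increasing. -/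
/-- The product of a tuple of steps, taken in order. -/
def stepProd {d r : ℕ} (W : Fin r → Step d) : Equiv.Perm (Fin d) :=
  (List.ofFn fun j => stepPerm (W j)).prod

/-- Conjugation of the step `x` by the step `c`, recorded again as a step. -/
def conjStep {d : ℕ} (c x : Step d) : Step d :=
  if h : stepPerm c x.1.1 < stepPerm c x.1.2 then
    ⟨(stepPerm c x.1.1, stepPerm c x.1.2), h⟩
  else
    ⟨(stepPerm c x.1.2, stepPerm c x.1.1),
      lt_of_le_of_ne (not_lt.mp h)
        (fun he => absurd ((stepPerm c).injective he) (ne_of_gt x.2))⟩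

/-- The sorting operator `R_i`: swap steps `i` and `i+1`, conjugating the step of
larger colour by the step of smaller colour; do nothing if the colours agree. -/
def Rop {d r : ℕ} (i : ℕ) (h : i + 1 < r) (W : Fin r → Step d) : Fin r → Step d :=
  let i0 : Fin r := ⟨i, Nat.lt_of_succ_lt h⟩
  let i1 : Fin r := ⟨i + 1, h⟩
  let a := W i0
  let b := W i1
  if colour a < colour b then
    Function.update (Function.update W i0 (conjStep a b)) i1 a
  else if colour b < colour a then
    Function.update (Function.update W i0 b) i1 (conjStep b a)
  else W

/-- The set of `r`-step walks on the transposition Cayley graph of `S(d)` from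
`ρ` to `σ`, encoded as tuples of steps with `ρ * (product of steps) = σ`. -/
def Walk (d r : ℕ) (ρ σ : Equiv.Perm (Fin d)) : Type :=
  {W : Fin r → Step d // ρ * stepProd W = σ}

/-- The spectrum of a walk: the sequence of colours of its steps. -/
def spec {d r : ℕ} {ρ σ : Equiv.Perm (Fin d)} (W : Walk d r ρ σ) : Fin r → Fin d :=
  fun j => colour (W.val j)

/-- The generator condition characterizing the sorting action: the homomorphism
`R : S(r) → Aut(Walk_r(ρ,σ))` sends each Coxeter generator `(i i+1)` to `R_i`. -/
def IsSortingAction {d r : ℕ} {ρ σ : Equiv.Perm (Fin d)}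
    (R : Equiv.Perm (Fin r) →* Equiv.Perm (Walk d r ρ σ)) : Prop :=
  ∀ (i : ℕ) (h : i + 1 < r) (W : Walk d r ρ σ),
    (R (Equiv.swap (⟨i, Nat.lt_of_succ_lt h⟩ : Fin r) (⟨i + 1, h⟩ : Fin r)) W).val
      = Rop i h W.val

/-!
The spectrum map is equivariant: `R_i` exchanges the colours at positions `i` and `i+1`, because
conjugating a step by a step of smaller colour only moves points below its colour and so keeps
that colour; and adjacent transpositions generate `S(r)`. Hence every orbit contains a walk with
sorted spectrum. Two monotone walks in one orbit have the same spectrum, so the permutation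
relating them fixes a monotone tuple. Removing descents one at a time (each removal lowers the
inversion count) writes such a permutation as a product of adjacent transpositions `(i i+1)` at
which the tuple is constant, and these act trivially on the walk.
-/

open Equiv Finset

namespace Equiv

lemma comp_swap_eq_self {α β : Type*} [DecidableEq α] {f : α → β} {a b : α}
    (hab : f a = f b) : f ∘ swap a b = f := by
  funext x
  rw [Function.comp_apply, swap_apply_def]
  split_ifs with hxa hxb
  · rw [hxa, hab]
  · rw [hxb, hab]
  · rfl

end Equiv

namespace Equiv.Perm

variable {r : ℕ}

abbrev adjSwap (i : ℕ) (h : i + 1 < r) : Perm (Fin r) :=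
  swap ⟨i, Nat.lt_of_succ_lt h⟩ ⟨i + 1, h⟩

def invCount (τ : Perm (Fin r)) : ℕ :=
  #{p : Fin r × Fin r | p.1 < p.2 ∧ τ p.2 < τ p.1}

lemma adjSwap_lt_adjSwap_iff {i : ℕ} {h : i + 1 < r} {x y : Fin r}
    (hxy : ¬(x.val = i + 1 ∧ y.val = i)) (hxy' : ¬(x.val = i ∧ y.val = i + 1)) :
    adjSwap i h x < adjSwap i h y ↔ x < y := by
  simp only [adjSwap, swap_apply_def, Fin.lt_def, Fin.ext_iff]
  split_ifs <;> simp only at * <;> omega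

lemma invCount_mul_adjSwap_lt {τ : Perm (Fin r)} {i : ℕ} {h : i + 1 < r}
    (hd : τ ⟨i + 1, h⟩ < τ ⟨i, Nat.lt_of_succ_lt h⟩) :
    invCount (τ * adjSwap i h) < invCount τ := by
  set s := adjSwap i h
  -- reindexed by `s × s`, the inversions of `τ * s` are those of `τ` other than `(i, i+1)`
  have hcard : invCount (τ * s) = #{p : Fin r × Fin r | s p.1 < s p.2 ∧ τ p.2 < τ p.1} := by
    refine card_equiv (s.prodCongr s) fun p => ?_
    simp only [mem_filter, mem_univ, true_and]
    simp [s]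
  rw [hcard, invCount]
  refine card_lt_card <| (ssubset_iff_of_subset ?_).mpr
    ⟨(⟨i, Nat.lt_of_succ_lt h⟩, ⟨i + 1, h⟩), ?_, ?_⟩
  · rintro ⟨x, y⟩
    simp only [mem_filter, mem_univ, true_and]
    rintro ⟨hs, hτ⟩
    refine ⟨(adjSwap_lt_adjSwap_iff ?_ ?_).mp hs, hτ⟩
    · rintro ⟨hx, hy⟩
      obtain rfl : x = ⟨i + 1, h⟩ := Fin.ext hx
      obtain rfl : y = ⟨i, Nat.lt_of_succ_lt h⟩ := Fin.ext hy
      exact hτ.asymm hd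
    · rintro ⟨hx, hy⟩
      obtain rfl : x = ⟨i, Nat.lt_of_succ_lt h⟩ := Fin.ext hx
      obtain rfl : y = ⟨i + 1, h⟩ := Fin.ext hy
      simp [s, Fin.lt_def] at hs
  · simp only [mem_filter, mem_univ, true_and]
    exact ⟨Fin.mk_lt_mk.mpr i.lt_succ_self, hd⟩
  · simp [s]

lemma exists_adjacent_descent {τ : Perm (Fin r)} (hτ : τ ≠ 1) :
    ∃ (i : ℕ) (h : i + 1 < r), τ ⟨i + 1, h⟩ < τ ⟨i, Nat.lt_of_succ_lt h⟩ := by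
  contrapose! hτ
  obtain _ | n := r
  · exact Subsingleton.elim _ _
  have hmono : Monotone τ := Fin.monotone_iff_le_succ.mpr fun i => hτ i i.succ.isLt
  ext j
  exact congrArg Fin.val (congrFun (Tuple.unique_monotone (f := id) (τ := 1) hmono monotone_id) j)

def adjSwapsFixing {α : Type*} (f : Fin r → α) : Set (Perm (Fin r)) :=
  {σ | ∃ (i : ℕ) (h : i + 1 < r),
    f ⟨i, Nat.lt_of_succ_lt h⟩ = f ⟨i + 1, h⟩ ∧ adjSwap i h = σ}

lemma mem_closure_adjSwapsFixing_of_comp_eq {α : Type*} [PartialOrder α] {f : Fin r → α}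
    (hf : Monotone f) {τ : Perm (Fin r)} (hτ : f ∘ τ = f) :
    τ ∈ Submonoid.closure (adjSwapsFixing f) := by
  induction hn : invCount τ using Nat.strong_induction_on generalizing τ with
  | _ n ih =>
    rcases eq_or_ne τ 1 with rfl | hne
    · exact one_mem _
    obtain ⟨i, h, hd⟩ := exists_adjacent_descent hne
    have hfi : f ⟨i, Nat.lt_of_succ_lt h⟩ = f ⟨i + 1, h⟩ := by
      refine le_antisymm (hf (Fin.mk_le_mk.mpr i.le_succ)) ?_
      rw [← congrFun hτ, ← congrFun hτ ⟨i, _⟩]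
      exact hf hd.le
    have hτs : f ∘ ⇑(τ * adjSwap i h) = f := by
      rw [coe_mul, ← Function.comp_assoc, hτ, comp_swap_eq_self hfi]
    rw [← mul_swap_mul_self ⟨i, Nat.lt_of_succ_lt h⟩ ⟨i + 1, h⟩ τ]
    exact mul_mem (ih _ (hn ▸ invCount_mul_adjSwap_lt hd) hτs rfl)
      (Submonoid.subset_closure ⟨i, h, hfi, rfl⟩)

end Equiv.Perm

section SortingAction

open Equiv.Perm

variable {d r : ℕ}

lemma colour_conjStep_of_lt {c x : Step d} (h : colour c < colour x) :
    colour (conjStep c x) = colour x := by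
  have hfix : stepPerm c x.1.2 = x.1.2 := swap_apply_of_ne_of_ne (c.2.trans h).ne' h.ne'
  have hlt : stepPerm c x.1.1 < stepPerm c x.1.2 := by
    rw [hfix, stepPerm, swap_apply_def]
    split_ifs
    exacts [h, c.2.trans h, x.2]
  have hconj : conjStep c x = ⟨(stepPerm c x.1.1, stepPerm c x.1.2), hlt⟩ := dif_pos hlt
  rw [hconj]
  exact hfix

lemma colour_Rop (i : ℕ) (h : i + 1 < r) (W : Fin r → Step d) (j : Fin r) :
    colour (Rop i h W j) = colour (W (adjSwap i h j)) := by
  unfold Rop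
  split_ifs with hlt hgt
  · simp only [Function.update_apply, swap_apply_def]
    split_ifs <;> simp_all [colour_conjStep_of_lt]
  · simp only [Function.update_apply, swap_apply_def]
    split_ifs <;> simp_all [colour_conjStep_of_lt]
  · have hc := le_antisymm (not_lt.mp hgt) (not_lt.mp hlt)
    simp only [swap_apply_def]
    split_ifs <;> simp [*]

lemma Rop_eq_self (i : ℕ) (h : i + 1 < r) (W : Fin r → Step d)
    (hc : colour (W ⟨i, Nat.lt_of_succ_lt h⟩) = colour (W ⟨i + 1, h⟩)) : Rop i h W = W := by
  simp [Rop, hc]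

variable {ρ σ : Perm (Fin d)} {R : Perm (Fin r) →* Perm (Walk d r ρ σ)}

lemma spec_sorting_adjSwap (hR : IsSortingAction R) (i : ℕ) (h : i + 1 < r) (W : Walk d r ρ σ) :
    spec (R (adjSwap i h) W) = spec W ∘ adjSwap i h := by
  funext j
  rw [spec, hR]
  exact colour_Rop i h W.val j

lemma sorting_adjSwap_eq_self (hR : IsSortingAction R) {i : ℕ} {h : i + 1 < r}
    {W : Walk d r ρ σ} (hc : spec W ⟨i, Nat.lt_of_succ_lt h⟩ = spec W ⟨i + 1, h⟩) :
    R (adjSwap i h) W = W :=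
  Subtype.ext ((hR i h W).trans (Rop_eq_self i h W.val hc))

lemma spec_sorting (hR : IsSortingAction R) (π : Perm (Fin r)) (W : Walk d r ρ σ) :
    spec (R π W) = spec W ∘ ⇑π⁻¹ := by
  -- every permutation fixes a constant tuple, so `S(r)` is generated by the `adjSwap i h`
  have hπ := mem_closure_adjSwapsFixing_of_comp_eq (f := fun _ : Fin r => ()) monotone_const
    (τ := π) rfl
  induction hπ using Submonoid.closure_induction generalizing W with
  | mem _ hs =>
    obtain ⟨i, h, -, rfl⟩ := hs
    rw [spec_sorting_adjSwap hR, swap_inv]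
  | one => simp
  | mul a b _ _ ha hb =>
    rw [map_mul, Perm.mul_apply, ha, hb, mul_inv_rev, coe_mul, Function.comp_assoc]

lemma sorting_eq_self_of_mem_closure (hR : IsSortingAction R) {W : Walk d r ρ σ}
    {τ : Perm (Fin r)} (hτ : τ ∈ Submonoid.closure (adjSwapsFixing (spec W))) :
    R τ W = W := by
  induction hτ using Submonoid.closure_induction with
  | mem _ hs =>
    obtain ⟨i, h, hc, rfl⟩ := hs
    exact sorting_adjSwap_eq_self hR hc
  | one => simp
  | mul a b _ _ ha hb => rw [map_mul, Perm.mul_apply, hb, ha]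

lemma sorting_eq_self_of_monotone (hR : IsSortingAction R) {W : Walk d r ρ σ}
    (hW : Monotone (spec W)) {π : Perm (Fin r)} (hπW : Monotone (spec (R π W))) :
    R π W = W := by
  rw [spec_sorting hR] at hπW
  have hfix : spec W ∘ ⇑π⁻¹ = spec W := by
    simpa using Tuple.unique_monotone (τ := 1) hπW hW
  have hinv := sorting_eq_self_of_mem_closure hR (mem_closure_adjSwapsFixing_of_comp_eq hW hfix)
  rw [map_inv, Perm.inv_eq_iff_eq] at hinv
  exact hinv.symm

end SortingAction

/-- Every orbit of the sorting action of `S(r)` on `Walk_r(ρ,σ)` contains exactly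
one monotone walk, i.e. one walk with weakly increasing spectrum. -/
theorem stmt8 (d r : ℕ) (ρ σ : Equiv.Perm (Fin d))
    (R : Equiv.Perm (Fin r) →* Equiv.Perm (Walk d r ρ σ)) (hR : IsSortingAction R)
    (W : Walk d r ρ σ) :
    ∃! W' : Walk d r ρ σ,
      (∃ π : Equiv.Perm (Fin r), R π W = W') ∧ Monotone (spec W') := by
  set π₀ := (Tuple.sort (spec W))⁻¹
  have hmono : Monotone (spec (R π₀ W)) := by
    rw [spec_sorting hR, inv_inv]
    exact Tuple.monotone_sort _
  refine ⟨R π₀ W, ⟨⟨π₀, rfl⟩, hmono⟩, ?_⟩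
  rintro _ ⟨⟨π, rfl⟩, hπ⟩
  have hfactor : R π W = R (π * π₀⁻¹) (R π₀ W) := by
    rw [← Perm.mul_apply, ← map_mul, inv_mul_cancel_right]
  rw [hfactor] at hπ ⊢
  exact sorting_eq_self_of_monotone hR hmono hπ
end

section
/- The number of r-step monotone walks on the Cayley graph of S(d) from ρ to σ depends only on the cycle type of ρ⁻¹σ: if ρ₁⁻¹σ₁ and ρ₂⁻¹σ₂ are conjugate in S(d), then the number of sequences of transpositions ((s₁ t₁),…,(s_r t_r)) with sᵢ < tᵢ, t₁ ≤ ⋯ ≤ t_r, and ρ(s₁ t₁)⋯(s_r t_r) = σ is the same for both pairs. -/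
/-!
Let `J_t = ∑_{s < t} (s t)` be the Jucys–Murphy elements of `ℤ[S(d)]`. Splitting off the first
step shows that the sum of all `r`-step monotone walks from the identity, as an element of
`ℤ[S(d)]`, is the `r`-th coefficient of `∏_t (1 - J_t X)⁻¹` (factors in increasing `t`), i.e. the
complete homogeneous polynomial `h_r(J_0, …, J_{d-1})`. The `J_t` commute; an adjacent
transposition `σ = (a a+1)` commutes with `J_u` for `u ∉ {a, a+1}`, and the relations
`σ J_a = J_{a+1} σ - 1`, `σ J_{a+1} = J_a σ + 1` show that it commutes with `J_a + J_{a+1}` and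
`J_a J_{a+1}`, hence with `((1 - J_{a+1} X)(1 - J_a X))⁻¹`. So the series is central, its
coefficients are class functions, and a walk from `ρ` to `σ` is a walk from `1` to `ρ⁻¹σ`.
-/

noncomputable section

namespace PowerSeries

variable {A : Type*} [Ring A]

def geomSeries (x : A) : A⟦X⟧ := mk (x ^ ·)

def prodGeomSeries (xs : List A) : A⟦X⟧ := (xs.map geomSeries).prod

lemma commute_C_iff {s : A} {f : A⟦X⟧} : Commute (C s) f ↔ ∀ n, Commute s (coeff n f) := by
  simp only [Commute, SemiconjBy, PowerSeries.ext_iff, coeff_C_mul, coeff_mul_C]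

lemma commute_C_geomSeries {s x : A} (h : Commute s x) : Commute (C s) (geomSeries x) :=
  commute_C_iff.2 fun n => by simpa [geomSeries] using h.pow_right n

lemma geomSeries_eq (x : A) : geomSeries x = 1 + X * C x * geomSeries x := by
  ext (_ | n) <;> simp [geomSeries, mul_assoc, coeff_succ_X_mul, pow_succ']

lemma one_sub_X_mul_C_mul_geomSeries (x : A) : (1 - X * C x) * geomSeries x = 1 := by
  rw [sub_mul, one_mul, sub_eq_iff_eq_add]
  exact geomSeries_eq x

lemma geomSeries_mul_one_sub_X_mul_C (x : A) : geomSeries x * (1 - X * C x) = 1 := by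
  have : Commute (geomSeries x) (1 - X * C x) :=
    .sub_right (.one_right _) (.mul_right (commute_X _) (commute_C_geomSeries (.refl x)).symm)
  rw [this.eq, one_sub_X_mul_C_mul_geomSeries]

lemma commute_C_geomSeries_mul_geomSeries {s x y : A} (hxy : Commute x y)
    (hadd : Commute s (x + y)) (hmul : Commute s (x * y)) :
    Commute (C s) (geomSeries x * geomSeries y) := by
  let u : A⟦X⟧ˣ :=
    { val := (1 - X * C y) * (1 - X * C x)
      inv := geomSeries x * geomSeries y
      val_inv := by
        rw [mul_assoc, ← mul_assoc (1 - X * C x), one_sub_X_mul_C_mul_geomSeries, one_mul,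
          one_sub_X_mul_C_mul_geomSeries]
      inv_val := by
        rw [mul_assoc, ← mul_assoc (geomSeries y), geomSeries_mul_one_sub_X_mul_C, one_mul,
          geomSeries_mul_one_sub_X_mul_C] }
  have hu : (u : A⟦X⟧) = 1 - X * C (x + y) + X ^ 2 * C (x * y) := by
    have hX : X * C y * (X * C x) = X ^ 2 * (C y * C x) := by
      rw [mul_assoc, ← mul_assoc (C y), (commute_X (C y)).eq, sq, mul_assoc, mul_assoc]
    simp only [u, map_add, map_mul, hxy.eq]
    rw [sub_mul, mul_sub, mul_sub, one_mul, mul_one, one_mul, hX, mul_add]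
    abel
  have hsu : Commute (C s) u := by
    rw [hu]
    exact .add_right (.sub_right (.one_right _) (.mul_right (commute_X _) (hadd.map C)))
      (.mul_right ((commute_X _).pow_right 2) (hmul.map C))
  exact hsu.units_inv_right

lemma commute_C_prodGeomSeries {s : A} {xs : List A} (h : ∀ x ∈ xs, Commute s x) :
    Commute (C s) (prodGeomSeries xs) :=
  Commute.list_prod_right _ _ (by simpa using fun x hx => commute_C_geomSeries (h x hx))

lemma coeff_zero_prodGeomSeries (xs : List A) : coeff 0 (prodGeomSeries xs) = 1 := by
  simp [prodGeomSeries, coeff_zero_eq_constantCoeff, map_list_prod, geomSeries, Function.comp_def]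

lemma coeff_succ_geomSeries_mul (n : ℕ) (x : A) (f : A⟦X⟧) :
    coeff (n + 1) (geomSeries x * f) = x * coeff n (geomSeries x * f) + coeff (n + 1) f := by
  conv_lhs => rw [geomSeries_eq, add_mul, one_mul, mul_assoc, mul_assoc]
  rw [map_add, coeff_succ_X_mul, coeff_C_mul, add_comm]

end PowerSeries

open Equiv PowerSeries
open MonoidAlgebra (of)

lemma swap_apply_lt_iff {α : Type*} [DecidableEq α] [LT α] {a b t : α} (h : a < t ↔ b < t)
    (w : α) : swap a b w < t ↔ w < t := by
  rcases eq_or_ne w a with rfl | hwa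
  · simp [h]
  rcases eq_or_ne w b with rfl | hwb
  · simp [h]
  rw [swap_apply_of_ne_of_ne hwa hwb]

lemma Fin.monotone_cons_iff {α : Type*} [Preorder α] {n : ℕ} {a : α} {f : Fin n → α} :
    Monotone (Fin.cons a f : Fin (n + 1) → α) ↔ (∀ j, a ≤ f j) ∧ Monotone f := by
  simpa only [monotone_iff_forall_lt] using! Fin.liftFun_cons (· ≤ ·)

lemma le_of_mem_drop_finRange {d t : ℕ} {u : Fin d} (hu : u ∈ (List.finRange d).drop t) :
    t ≤ u := by
  obtain ⟨j, hj, rfl⟩ := List.mem_drop_iff_getElem.1 hu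
  simp

variable {d : ℕ}

instance : Fintype (Step d) := inferInstanceAs (Fintype {p : Fin d × Fin d // p.1 < p.2})

def jucysMurphy (u : Fin d) : MonoidAlgebra ℤ (Perm (Fin d)) :=
  ∑ s ∈ Finset.Iio u, of ℤ _ (swap s u)

lemma sum_stepPerm_colour_eq_jucysMurphy (u : Fin d) :
    ∑ x : Step d with colour x = u, of ℤ _ (stepPerm x) = jucysMurphy u := by
  refine Finset.sum_bij (fun x _ => x.1.1) ?_ ?_ ?_ ?_ <;>
    simp only [Finset.mem_filter, Finset.mem_univ, true_and, Finset.mem_Iio]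
  · rintro x rfl
    exact x.2
  · rintro x rfl y hy h
    exact Subtype.ext (Prod.ext h hy.symm)
  · intro s hs
    exact ⟨⟨(s, u), hs⟩, rfl, rfl⟩
  · rintro x rfl
    rfl

lemma commute_of_jucysMurphy {θ : Perm (Fin d)} {t : Fin d} (hfix : θ t = t)
    (hlt : ∀ s, θ s < t ↔ s < t) : Commute (of ℤ _ θ) (jucysMurphy t) := by
  simp only [Commute, SemiconjBy, jucysMurphy, Finset.mul_sum, Finset.sum_mul, ← map_mul]
  refine Finset.sum_equiv θ (by simp [hlt]) fun s _ => ?_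
  rw [mul_swap_eq_swap_mul, hfix]

lemma commute_of_swap_jucysMurphy {a b u : Fin d} (ha : u ≠ a) (hb : u ≠ b)
    (h : a < u ↔ b < u) : Commute (of ℤ _ (swap a b)) (jucysMurphy u) :=
  commute_of_jucysMurphy (swap_apply_of_ne_of_ne ha hb) (swap_apply_lt_iff h)

lemma jucysMurphy_commute (u v : Fin d) : Commute (jucysMurphy u) (jucysMurphy v) := by
  wlog huv : u < v generalizing u v
  · rcases (not_lt.1 huv).lt_or_eq with h | rfl
    · exact (this v u h).symm
    · exact .refl _
  refine .sum_left _ _ _ fun s hs => ?_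
  have hsv : s < v := (Finset.mem_Iio.1 hs).trans huv
  exact commute_of_swap_jucysMurphy hsv.ne' huv.ne' (iff_of_true hsv huv)

section Adjacent

variable {a b : Fin d} (hab : (a : ℕ) + 1 = b)
include hab

lemma Iio_eq_insert_Iio_of_succ_eq : Finset.Iio b = insert a (Finset.Iio a) := by
  ext s
  simp only [Finset.mem_Iio, Finset.mem_insert, Fin.lt_def, Fin.ext_iff]
  omega

lemma of_swap_mul_jucysMurphy_left :
    of ℤ _ (swap a b) * jucysMurphy a = jucysMurphy b * of ℤ _ (swap a b) - 1 := by
  rw [jucysMurphy, jucysMurphy, Iio_eq_insert_Iio_of_succ_eq hab, Finset.sum_insert (by simp),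
    Finset.mul_sum, add_mul, Finset.sum_mul, ← map_mul, swap_mul_self, map_one,
    add_sub_cancel_left]
  refine Finset.sum_congr rfl fun s hs => ?_
  have hsa : s < a := Finset.mem_Iio.1 hs
  rw [← map_mul, ← map_mul, mul_swap_eq_swap_mul, swap_apply_left,
    swap_apply_of_ne_of_ne hsa.ne (Fin.ne_of_val_ne (by omega))]

lemma of_swap_mul_jucysMurphy_right :
    of ℤ _ (swap a b) * jucysMurphy b = jucysMurphy a * of ℤ _ (swap a b) + 1 := by
  rw [jucysMurphy, jucysMurphy, Iio_eq_insert_Iio_of_succ_eq hab, Finset.sum_insert (by simp),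
    mul_add, Finset.mul_sum, Finset.sum_mul, ← map_mul, swap_mul_self, map_one, add_comm]
  refine congrArg (· + 1) (Finset.sum_congr rfl fun s hs => ?_)
  have hsa : s < a := Finset.mem_Iio.1 hs
  rw [← map_mul, ← map_mul, mul_swap_eq_swap_mul, swap_apply_right,
    swap_apply_of_ne_of_ne hsa.ne (Fin.ne_of_val_ne (by omega))]

lemma commute_of_swap_jucysMurphy_add :
    Commute (of ℤ _ (swap a b)) (jucysMurphy a + jucysMurphy b) := by
  rw [Commute, SemiconjBy, mul_add, add_mul, of_swap_mul_jucysMurphy_left hab,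
    of_swap_mul_jucysMurphy_right hab]
  abel

lemma commute_of_swap_jucysMurphy_mul :
    Commute (of ℤ _ (swap a b)) (jucysMurphy a * jucysMurphy b) := by
  rw [Commute, SemiconjBy, ← mul_assoc, of_swap_mul_jucysMurphy_left hab, sub_mul, mul_assoc,
    of_swap_mul_jucysMurphy_right hab, (jucysMurphy_commute a b).eq]
  noncomm_ring

lemma commute_of_swap_jucysMurphy_of_ne {u : Fin d} (ha : u ≠ a) (hb : u ≠ b) :
    Commute (of ℤ _ (swap a b)) (jucysMurphy u) := by
  refine commute_of_swap_jucysMurphy ha hb ?_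
  rw [Fin.lt_def, Fin.lt_def]
  have := Fin.val_ne_of_ne ha
  omega

end Adjacent

/-- `∏_{t ≤ u < d} (1 - J_u X)⁻¹`, factors in increasing order of `u`. -/
def jucysMurphySeries (d t : ℕ) : (MonoidAlgebra ℤ (Perm (Fin d)))⟦X⟧ :=
  prodGeomSeries (((List.finRange d).drop t).map jucysMurphy)

lemma jucysMurphySeries_of_lt {t : ℕ} (ht : t < d) :
    jucysMurphySeries d t = geomSeries (jucysMurphy ⟨t, ht⟩) * jucysMurphySeries d (t + 1) := by
  rw [jucysMurphySeries, List.drop_eq_getElem_cons (by simpa using ht)]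
  simp [prodGeomSeries, jucysMurphySeries]

lemma jucysMurphySeries_of_le {t : ℕ} (ht : d ≤ t) : jucysMurphySeries d t = 1 := by
  rw [jucysMurphySeries, List.drop_eq_nil_of_le (by simpa using ht)]
  rfl

lemma coeff_succ_jucysMurphySeries (r t : ℕ) :
    coeff (r + 1) (jucysMurphySeries d t) =
      ∑ u : Fin d with t ≤ u.val, jucysMurphy u * coeff r (jucysMurphySeries d u) := by
  by_cases ht : t < d
  · have hfilter : Finset.univ.filter (fun u : Fin d => t ≤ u.val) =
        insert ⟨t, ht⟩ (Finset.univ.filter fun u : Fin d => t + 1 ≤ u.val) := by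
      ext u
      simp only [Finset.mem_filter, Finset.mem_univ, true_and, Finset.mem_insert, Fin.ext_iff]
      omega
    rw [hfilter, Finset.sum_insert (by simp), ← coeff_succ_jucysMurphySeries r (t + 1),
      jucysMurphySeries_of_lt ht, coeff_succ_geomSeries_mul, ← jucysMurphySeries_of_lt ht]
  · rw [jucysMurphySeries_of_le (not_lt.1 ht), Finset.sum_eq_zero fun u hu => ?_]
    · simp
    · have := u.isLt
      have := (Finset.mem_filter.1 hu).2
      omega
termination_by d - t

lemma commute_C_of_swap_jucysMurphySeries {a b : Fin d} (hab : (a : ℕ) + 1 = b) {t : ℕ}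
    (ht : t ≤ a) : Commute (C (of ℤ _ (swap a b))) (jucysMurphySeries d t) := by
  induction ht using Nat.decreasingInduction with
  | self =>
    have hbd : (a : ℕ) + 1 < d := hab ▸ b.isLt
    rw [jucysMurphySeries_of_lt a.isLt, jucysMurphySeries_of_lt hbd, ← mul_assoc,
      show (⟨a + 1, hbd⟩ : Fin d) = b from Fin.ext hab]
    refine .mul_right (commute_C_geomSeries_mul_geomSeries (jucysMurphy_commute a b)
      (commute_of_swap_jucysMurphy_add hab) (commute_of_swap_jucysMurphy_mul hab))
      (commute_C_prodGeomSeries fun x hx => ?_)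
    obtain ⟨u, hu, rfl⟩ := List.mem_map.1 hx
    have := le_of_mem_drop_finRange hu
    exact commute_of_swap_jucysMurphy_of_ne hab (Fin.ne_of_val_ne (by omega))
      (Fin.ne_of_val_ne (by omega))
  | of_succ k hk ih =>
    rw [jucysMurphySeries_of_lt (hk.trans a.isLt)]
    exact .mul_right (commute_C_geomSeries (commute_of_swap_jucysMurphy_of_ne hab
      (Fin.ne_of_val_ne hk.ne) (Fin.ne_of_val_ne (show k ≠ b by omega)))) ih

lemma commute_C_of_jucysMurphySeries_zero (g : Perm (Fin d)) :
    Commute (C (of ℤ _ g)) (jucysMurphySeries d 0) := by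
  cases d with
  | zero =>
    rw [Subsingleton.elim g 1, map_one, map_one]
    exact .one_left _
  | succ n =>
    refine Submonoid.closure_induction (motive := fun g _ => Commute (C (of ℤ _ g)) _) ?_ ?_ ?_
      (Perm.mclosure_swap_castSucc_succ n ▸ Submonoid.mem_top g)
    · rintro _ ⟨i, rfl⟩
      exact commute_C_of_swap_jucysMurphySeries (by simp) (Nat.zero_le _)
    · rw [map_one, map_one]
      exact .one_left _
    · intro g h _ _ hg hh
      simpa only [map_mul] using hg.mul_left hh

def IsMonotoneAbove (t : ℕ) {r : ℕ} (W : Fin r → Step d) : Prop :=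
  (∀ j, t ≤ (colour (W j)).val) ∧ Monotone fun j => colour (W j)

lemma isMonotoneAbove_cons {t r : ℕ} {x : Step d} {g : Fin r → Step d} :
    IsMonotoneAbove t (Fin.cons x g : Fin (r + 1) → Step d) ↔
      t ≤ (colour x).val ∧ IsMonotoneAbove (colour x) g := by
  simp only [IsMonotoneAbove, Fin.forall_fin_succ, Fin.cons_zero, Fin.cons_succ]
  rw [← Function.comp_def colour, Fin.comp_cons, Fin.monotone_cons_iff]
  constructor
  · rintro ⟨⟨htx, -⟩, hle, hmono⟩
    exact ⟨htx, hle, hmono⟩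
  · rintro ⟨htx, hle, hmono⟩
    exact ⟨⟨htx, fun j => htx.trans (hle j)⟩, hle, hmono⟩

lemma stepProd_cons {r : ℕ} (x : Step d) (g : Fin r → Step d) :
    stepProd (Fin.cons x g : Fin (r + 1) → Step d) = stepPerm x * stepProd g := by
  simp [stepProd, List.ofFn_succ]

open scoped Classical in
def monotoneWalkSum (d r t : ℕ) : MonoidAlgebra ℤ (Perm (Fin d)) :=
  ∑ W : Fin r → Step d with IsMonotoneAbove t W, of ℤ _ (stepProd W)

lemma monotoneWalkSum_zero (t : ℕ) : monotoneWalkSum d 0 t = 1 := by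
  simp [monotoneWalkSum, IsMonotoneAbove, stepProd, Subsingleton.monotone, MonoidAlgebra.one_def]

lemma monotoneWalkSum_succ (r t : ℕ) :
    monotoneWalkSum d (r + 1) t =
      ∑ u : Fin d with t ≤ u.val, jucysMurphy u * monotoneWalkSum d r u := by
  classical
  calc monotoneWalkSum d (r + 1) t
      = ∑ x : Step d with t ≤ (colour x).val,
          of ℤ _ (stepPerm x) * monotoneWalkSum d r (colour x) := by
        rw [monotoneWalkSum, Finset.sum_filter, ← (Fin.consEquiv fun _ => Step d).sum_comp,
          Fintype.sum_prod_type, Finset.sum_filter]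
        refine Fintype.sum_congr _ _ fun x => ?_
        simp only [Fin.consEquiv, Equiv.coe_fn_mk, isMonotoneAbove_cons, stepProd_cons, map_mul,
          ite_and]
        split_ifs
        · rw [monotoneWalkSum, Finset.mul_sum, Finset.sum_filter]
        · exact Finset.sum_const_zero
    _ = ∑ u : Fin d with t ≤ u.val, ∑ x : Step d with colour x = u,
          of ℤ _ (stepPerm x) * monotoneWalkSum d r u := by
        rw [← Finset.sum_fiberwise_of_maps_to (g := colour) (t := Finset.univ.filter (t ≤ ·.val))
          fun x hx => by simpa using hx]
        refine Finset.sum_congr rfl fun u hu => ?_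
        have htu : t ≤ u.val := (Finset.mem_filter.1 hu).2
        rw [Finset.filter_filter]
        refine Finset.sum_congr (Finset.filter_congr fun x _ => ?_) fun x hx => ?_
        · exact and_iff_right_of_imp fun hx => hx ▸ htu
        · rw [(Finset.mem_filter.1 hx).2]
    _ = _ := by simp_rw [← Finset.sum_mul, sum_stepPerm_colour_eq_jucysMurphy]

lemma monotoneWalkSum_eq_coeff_jucysMurphySeries (r t : ℕ) :
    monotoneWalkSum d r t = coeff r (jucysMurphySeries d t) := by
  induction r generalizing t with
  | zero => rw [monotoneWalkSum_zero, jucysMurphySeries, coeff_zero_prodGeomSeries]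
  | succ r ih => simp only [monotoneWalkSum_succ, coeff_succ_jucysMurphySeries, ih]

lemma commute_of_monotoneWalkSum (r : ℕ) (g : Perm (Fin d)) :
    Commute (of ℤ _ g) (monotoneWalkSum d r 0) := by
  rw [monotoneWalkSum_eq_coeff_jucysMurphySeries]
  exact commute_C_iff.1 (commute_C_of_jucysMurphySeries_zero g) r

lemma coeff_monotoneWalkSum_conj (r : ℕ) (τ π : Perm (Fin d)) :
    (monotoneWalkSum d r 0).coeff (τ * π * τ⁻¹) = (monotoneWalkSum d r 0).coeff π := by
  have := congrArg (fun z => z.coeff (τ * π)) (commute_of_monotoneWalkSum r τ).eq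
  simpa [MonoidAlgebra.of_apply, MonoidAlgebra.coeff_single_mul_apply,
    MonoidAlgebra.coeff_mul_single_apply] using this.symm

lemma natCard_monotoneWalks_eq_coeff (r : ℕ) (ρ σ : Perm (Fin d)) :
    (Nat.card {W : Fin r → Step d // ρ * stepProd W = σ ∧ Monotone fun j => colour (W j)} : ℤ) =
      (monotoneWalkSum d r 0).coeff (ρ⁻¹ * σ) := by
  classical
  simp only [Nat.card_eq_fintype_card, monotoneWalkSum, MonoidAlgebra.of_apply,
    MonoidAlgebra.coeff_sum, MonoidAlgebra.coeff_single, Finsupp.coe_finsetSum, Finset.sum_apply,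
    Finsupp.single_apply, Finset.sum_boole, Nat.cast_inj]
  rw [Fintype.card_subtype, Finset.filter_filter]
  refine congrArg Finset.card (Finset.filter_congr fun W _ => ?_)
  simp [IsMonotoneAbove, eq_inv_mul_iff_mul_eq, and_comm]

end

/-- The number of `r`-step monotone walks from `ρ` to `σ` on the transposition
Cayley graph of `S(d)` depends only on the cycle type (conjugacy class) of
`ρ⁻¹σ`. -/
theorem stmt10 (d r : ℕ) (ρ₁ σ₁ ρ₂ σ₂ : Equiv.Perm (Fin d))
    (h : IsConj (ρ₁⁻¹ * σ₁) (ρ₂⁻¹ * σ₂)) :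
    Nat.card {W : Fin r → Step d //
        ρ₁ * stepProd W = σ₁ ∧ Monotone fun j => colour (W j)} =
      Nat.card {W : Fin r → Step d //
        ρ₂ * stepProd W = σ₂ ∧ Monotone fun j => colour (W j)} := by
  obtain ⟨τ, hτ⟩ := isConj_iff.1 h
  apply Nat.cast_injective (R := ℤ)
  rw [natCard_monotoneWalks_eq_coeff, natCard_monotoneWalks_eq_coeff, ← hτ,
    coeff_monotoneWalkSum_conj]
end

section
/- For every d ≥ 1 and g ≥ 0, the sum over all pairs of partitions α, β of d of the monotone double Hurwitz numbers satisfies Σ_{α,β ⊢ d} H⃗_g(α,β) ≤ 4^d · H⃗_g(1^d, 1^d). -/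
/-- The steps and endpoints of a walk generate a transitive subgroup of `S(d)`. -/
def TransitiveVia {d : ℕ} (S : Set (Equiv.Perm (Fin d))) : Prop :=
  ∀ x y : Fin d, ∃ g ∈ Subgroup.closure S, g x = y

/-- The permutation `ρ` has cycle type given by the partition `α` of `d`
(fixed points contribute parts equal to `1`). -/
def HasCycleType {d : ℕ} (ρ : Equiv.Perm (Fin d)) (α : d.Partition) : Prop :=
  α.parts = ρ.cycleType + Multiset.replicate (d - ρ.support.card) 1

/-- The partition `1^d` of `d`. -/
def onesPartition (d : ℕ) : d.Partition :=
  ⟨Multiset.replicate d 1, fun {_} hi => by simp_all [Multiset.eq_of_mem_replicate hi], by simp⟩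

/-- The monotone double Hurwitz number `H⃗_g(α,β)`: the number of monotone
transitive walks of length `2g - 2 + ℓ(α) + ℓ(β)` on the transposition Cayley
graph of `S(d)` from a permutation of cycle type `α` to one of cycle type `β`. -/
noncomputable def monotoneHurwitz (d g : ℕ) (α β : d.Partition) : ℕ :=
  Nat.card {p : Equiv.Perm (Fin d) ×
      (Fin (2 * g + α.parts.card + β.parts.card - 2) → Step d) //
    HasCycleType p.1 α ∧ HasCycleType (p.1 * stepProd p.2) β ∧
    (Monotone fun j => colour (p.2 j)) ∧
    TransitiveVia ({p.1} ∪ Set.range fun j => stepPerm (p.2 j))}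

/-- The double Hurwitz number `H_g(α,β)`: same as `monotoneHurwitz` but without
the monotonicity constraint. -/
noncomputable def hurwitz (d g : ℕ) (α β : d.Partition) : ℕ :=
  Nat.card {p : Equiv.Perm (Fin d) ×
      (Fin (2 * g + α.parts.card + β.parts.card - 2) → Step d) //
    HasCycleType p.1 α ∧ HasCycleType (p.1 * stepProd p.2) β ∧
    TransitiveVia ({p.1} ∪ Set.range fun j => stepPerm (p.2 j))}

open Equiv Finset

namespace Equiv.Perm

variable {α : Type*} [Fintype α] [DecidableEq α]

-- Equivalently `Fintype.card α` minus the number of cycles of `σ`, fixed points included.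
def absLength (σ : Perm α) : ℕ := #σ.support - σ.cycleType.card

theorem card_cycleType_le_card_support (σ : Perm α) : σ.cycleType.card ≤ #σ.support := by
  have := Multiset.card_nsmul_le_sum fun _ (h : _ ∈ σ.cycleType) => two_le_of_mem_cycleType h
  rw [sum_cycleType, smul_eq_mul] at this
  omega

@[simp] theorem absLength_one : absLength (1 : Perm α) = 0 := by simp [absLength]

@[simp] theorem absLength_inv (σ : Perm α) : absLength σ⁻¹ = absLength σ := by
  simp [absLength]

theorem Disjoint.absLength_mul {σ τ : Perm α} (h : σ.Disjoint τ) :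
    absLength (σ * τ) = absLength σ + absLength τ := by
  have := card_cycleType_le_card_support σ
  have := card_cycleType_le_card_support τ
  simp only [absLength, h.cycleType_mul, h.card_support_mul, Multiset.card_add]
  omega

theorem IsCycle.absLength_eq {σ : Perm α} (hσ : σ.IsCycle) : absLength σ = #σ.support - 1 := by
  simp [absLength, hσ.cycleType]

theorem IsCycle.absLength_swap_mul_add_one {c : Perm α} (hc : c.IsCycle) {x : α} (hx : c x ≠ x) :
    absLength (swap x (c x) * c) + 1 = absLength c := by
  by_cases hccx : c (c x) = x
  · have hswap : c = swap x (c x) := hc.eq_swap_of_apply_apply_eq_self hx hccx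
    rw [hc.absLength_eq, hswap, swap_apply_left, swap_mul_self, absLength_one,
      card_support_swap hx.symm]
  · have hc' := hc.swap_mul hx hccx
    have hcard : #(swap x (c x) * c).support + 1 = #c.support := by
      rw [support_swap_mul_eq c x hccx, sdiff_singleton_eq_erase,
        card_erase_add_one (mem_support.2 hx)]
    have := hc'.two_le_card_support
    rw [hc'.absLength_eq, hc.absLength_eq]
    omega

theorem absLength_swap_mul_add_one {σ : Perm α} {x : α} (hx : σ x ≠ x) :
    absLength (swap x (σ x) * σ) + 1 = absLength σ := by
  set c := σ.cycleOf x
  have hcσ : c ∈ σ.cycleFactorsFinset := cycleOf_mem_cycleFactorsFinset_iff.2 (mem_support.2 hx)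
  have hdisj : (σ * c⁻¹).Disjoint c := disjoint_mul_inv_of_mem_cycleFactorsFinset hcσ
  have hc : c.IsCycle := isCycle_cycleOf σ hx
  have hcx : c x = σ x := cycleOf_apply_self σ x
  have hσ : σ = c * (σ * c⁻¹) := by rw [← hdisj.commute.eq]; group
  have hdisj' : (swap x (c x) * c).Disjoint (σ * c⁻¹) := by
    refine hdisj.symm.mono ?_ le_rfl
    by_cases hccx : c (c x) = x
    · rw [hc.eq_swap_of_apply_apply_eq_self (hcx ▸ hx) hccx]; simp
    · rw [support_swap_mul_eq c x hccx]; exact sdiff_subset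
  have hsplit : swap x (σ x) * σ = (swap x (c x) * c) * (σ * c⁻¹) := by
    rw [hcx, mul_assoc, ← hσ]
  conv_rhs => rw [hσ, hdisj.symm.absLength_mul, ← hc.absLength_swap_mul_add_one (hcx ▸ hx)]
  rw [hsplit, hdisj'.absLength_mul, add_right_comm]

end Equiv.Perm

theorem List.eq_of_pairwise_of_filter_eq {α κ : Type*} [LinearOrder κ] (f : α → κ)
    {l₁ l₂ : List α} (h₁ : l₁.Pairwise (f · ≤ f ·)) (h₂ : l₂.Pairwise (f · ≤ f ·))
    (h : ∀ c, l₁.filter (f · = c) = l₂.filter (f · = c)) : l₁ = l₂ := by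
  have mem_of_mem : ∀ {l l' : List α}, (∀ c, l.filter (f · = c) = l'.filter (f · = c)) →
      ∀ x ∈ l', x ∈ l := fun hll' x hx => by
    simpa [hx] using congrArg (x ∈ ·) (hll' (f x))
  induction l₁ generalizing l₂ with
  | nil => simpa [List.eq_nil_iff_forall_not_mem] using (mem_of_mem h ·)
  | cons a l₁ ih =>
    obtain _ | ⟨b, l₂⟩ := l₂
    · simpa using mem_of_mem (fun c => (h c).symm) a
    have low₁ : ∀ x ∈ a :: l₁, f a ≤ f x :=
      List.forall_mem_cons.2 ⟨le_rfl, (List.pairwise_cons.1 h₁).1⟩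
    have low₂ : ∀ x ∈ b :: l₂, f b ≤ f x :=
      List.forall_mem_cons.2 ⟨le_rfl, (List.pairwise_cons.1 h₂).1⟩
    have hab : f a = f b := le_antisymm (low₁ b (mem_of_mem h b List.mem_cons_self))
      (low₂ a (mem_of_mem (fun c => (h c).symm) a List.mem_cons_self))
    obtain ⟨rfl, -⟩ : a = b ∧ _ := by simpa [List.filter_cons, hab] using h (f a)
    refine congrArg (a :: ·) (ih h₁.of_cons h₂.of_cons fun c => ?_)
    have := h c
    simp only [List.filter_cons] at this
    split_ifs at this <;> simpa using this

theorem List.exists_ofFn_eq {α : Type*} {n : ℕ} {l : List α} (h : l.length = n) :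
    ∃ W : Fin n → α, List.ofFn W = l := by
  subst h
  exact ⟨l.get, List.ofFn_get l⟩

theorem List.val_lt_of_mem_take_finRange {d k : ℕ} {c : Fin d} (hc : c ∈ (List.finRange d).take k) :
    c.val < k := by
  obtain ⟨j, hj, rfl⟩ := List.mem_take_iff_getElem.1 hc
  simpa using (lt_min_iff.1 hj).1

theorem Nat.Partition.card_parts_pos {n : ℕ} (p : n.Partition) (hn : n ≠ 0) : 0 < p.parts.card :=
  Multiset.card_pos.2 fun h => hn (by simpa [h] using p.parts_sum.symm)

namespace MonotoneHurwitz

variable {d : ℕ}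

instance : DecidableEq (Step d) := by unfold Step; infer_instance
instance : Fintype (Step d) := by unfold Step; infer_instance

def walkProd (l : List (Step d)) : Perm (Fin d) := (l.map stepPerm).prod

@[simp] theorem walkProd_cons (s : Step d) (l : List (Step d)) :
    walkProd (s :: l) = stepPerm s * walkProd l := List.prod_cons

@[simp] theorem walkProd_append (l l' : List (Step d)) :
    walkProd (l ++ l') = walkProd l * walkProd l' := by
  simp [walkProd]

theorem walkProd_mem {H : Subgroup (Perm (Fin d))} {l : List (Step d)}
    (h : ∀ s ∈ l, stepPerm s ∈ H) : walkProd l ∈ H :=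
  Subgroup.list_prod_mem H (by simpa using h)

theorem stepProd_eq_walkProd {r : ℕ} (W : Fin r → Step d) :
    stepProd W = walkProd (List.ofFn W) := by
  simp [stepProd, walkProd, List.map_ofFn, Function.comp_def]

def IsColourBlocks (m : Fin d → List (Step d)) : Prop := ∀ c, ∀ s ∈ m c, colour s = c

def colourBlocks (l : List (Step d)) : Fin d → List (Step d) := fun c => l.filter (colour · = c)

def joinBlocks (m : Fin d → List (Step d)) : List (Step d) := (List.finRange d).flatMap m

theorem isColourBlocks_colourBlocks (l : List (Step d)) : IsColourBlocks (colourBlocks l) :=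
  fun _ _ hs => by simpa using (List.mem_filter.1 hs).2

theorem mem_joinBlocks {m : Fin d → List (Step d)} {s : Step d} :
    s ∈ joinBlocks m ↔ ∃ c, s ∈ m c := by
  simp [joinBlocks]

theorem IsColourBlocks.colourBlocks_joinBlocks {m : Fin d → List (Step d)} (hm : IsColourBlocks m) :
    colourBlocks (joinBlocks m) = m := by
  funext c
  have hblock : ∀ b, (m b).filter (colour · = c) = if b = c then m b else [] := fun b => by
    split_ifs with hbc
    · exact List.filter_eq_self.2 fun s hs => by simpa [hbc] using hm b s hs
    · exact List.filter_eq_nil_iff.2 fun s hs => by simpa [hm b s hs] using hbc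
  obtain ⟨L₁, L₂, hL⟩ := List.append_of_mem (List.mem_finRange c)
  have hc : c ∉ L₁ ∧ c ∉ L₂ := by
    have := List.nodup_finRange d
    rw [hL, List.nodup_middle, List.nodup_cons] at this
    simpa using this.1
  have hnil : ∀ L : List (Fin d), c ∉ L →
      L.flatMap (fun b => if b = c then m b else []) = [] := fun L hL =>
    List.flatMap_eq_nil_iff.2 fun b hb => if_neg (ne_of_mem_of_not_mem hb hL)
  simp only [colourBlocks, joinBlocks, List.filter_flatMap, hblock]
  rw [hL, List.flatMap_append, List.flatMap_cons, hnil L₁ hc.1, hnil L₂ hc.2, if_pos rfl,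
    List.nil_append, List.append_nil]

theorem IsColourBlocks.pairwise_joinBlocks {m : Fin d → List (Step d)} (hm : IsColourBlocks m) :
    (joinBlocks m).Pairwise (colour · ≤ colour ·) := by
  refine List.pairwise_flatMap.2 ⟨fun c _ => ?_, (List.pairwise_lt_finRange d).imp ?_⟩
  · exact List.pairwise_of_forall_mem_list fun x hx y hy => by rw [hm c x hx, hm c y hy]
  · intro b c hbc x hx y hy
    rw [hm b x hx, hm c y hy]
    exact hbc.le

theorem joinBlocks_colourBlocks {l : List (Step d)} (hl : l.Pairwise (colour · ≤ colour ·)) :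
    joinBlocks (colourBlocks l) = l :=
  List.eq_of_pairwise_of_filter_eq colour (isColourBlocks_colourBlocks l).pairwise_joinBlocks hl
    fun c => congrFun (isColourBlocks_colourBlocks l).colourBlocks_joinBlocks c

def IsColourChoice (o : Fin d → Option (Step d)) : Prop := ∀ c, ∀ s ∈ o c, colour s = c

def insertChoice (o : Fin d → Option (Step d)) (m : Fin d → List (Step d)) :
    Fin d → List (Step d) := fun c => (o c).toList ++ m c

def chosen (o : Fin d → Option (Step d)) : Finset (Fin d) := {c | (o c).isSome}

def dropFirst (S : Finset (Fin d)) (m : Fin d → List (Step d)) : Fin d → List (Step d) :=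
  fun c => if c ∈ S then (m c).tail else m c

theorem IsColourBlocks.insertChoice {m : Fin d → List (Step d)} {o : Fin d → Option (Step d)}
    (hm : IsColourBlocks m) (ho : IsColourChoice o) : IsColourBlocks (insertChoice o m) := by
  intro c s hs
  rcases List.mem_append.1 hs with hs | hs
  · exact ho c s (Option.mem_toList.1 hs)
  · exact hm c s hs

theorem dropFirst_chosen_insertChoice (o : Fin d → Option (Step d)) (m : Fin d → List (Step d)) :
    dropFirst (chosen o) (insertChoice o m) = m := by
  funext c
  cases h : o c <;> simp [dropFirst, chosen, insertChoice, h]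

theorem length_joinBlocks_insertChoice (o : Fin d → Option (Step d)) (m : Fin d → List (Step d)) :
    (joinBlocks (insertChoice o m)).length = #(chosen o) + (joinBlocks m).length := by
  have hcard : #(chosen o) = ∑ c, (o c).toList.length := by
    rw [chosen, Finset.card_filter]
    exact Finset.sum_congr rfl fun c _ => by cases o c <;> rfl
  simp only [joinBlocks, List.length_flatMap, insertChoice, List.length_append,
    ← Fin.sum_univ_def, Finset.sum_add_distrib, hcard]

theorem IsColourChoice.update {o : Fin d → Option (Step d)} (ho : IsColourChoice o) {t : Fin d}
    {s : Step d} (hs : colour s = t) : IsColourChoice (Function.update o t (some s)) := by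
  intro c s' hs'
  by_cases hct : c = t
  · subst hct
    obtain rfl : s' = s := by simpa using hs'.symm
    exact hs
  · exact ho c s' (by simpa [hct] using hs')

theorem card_chosen_update {o : Fin d → Option (Step d)} {t : Fin d} (ht : o t = none)
    (s : Step d) : #(chosen (Function.update o t (some s))) = #(chosen o) + 1 := by
  have : chosen (Function.update o t (some s)) = insert t (chosen o) := by
    ext c
    by_cases hct : c = t <;> simp [chosen, hct]
  rw [this, card_insert_of_notMem (by simp [chosen, ht])]

theorem joinBlocks_subset_insertChoice (o : Fin d → Option (Step d)) (m : Fin d → List (Step d)) :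
    joinBlocks m ⊆ joinBlocks (insertChoice o m) := fun s hs => by
  obtain ⟨c, hc⟩ := mem_joinBlocks.1 hs
  exact mem_joinBlocks.2 ⟨c, List.mem_append_right _ hc⟩

def fixingFrom (d k : ℕ) : Subgroup (Perm (Fin d)) :=
  fixingSubgroup (Perm (Fin d)) {x : Fin d | k ≤ x.val}

theorem mem_fixingFrom {k : ℕ} {σ : Perm (Fin d)} :
    σ ∈ fixingFrom d k ↔ ∀ x : Fin d, k ≤ x.val → σ x = x := by
  simp [fixingFrom, mem_fixingSubgroup_iff]

theorem stepPerm_mem_fixingFrom {s : Step d} {k : ℕ} (hs : (colour s).val < k) :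
    stepPerm s ∈ fixingFrom d k :=
  mem_fixingFrom.2 fun x hx =>
    have hsx : s.1.2 < x := Fin.lt_def.2 (hs.trans_le hx)
    swap_apply_of_ne_of_ne (ne_of_gt (s.2.trans hsx)) (ne_of_gt hsx)

theorem apply_lt_of_mem_fixingFrom {σ : Perm (Fin d)} {t : Fin d} (hσ : σ ∈ fixingFrom d (t + 1))
    (ht : σ t ≠ t) : σ t < t := by
  by_contra! hle
  have hgt : t.val + 1 ≤ (σ t).val := Fin.lt_def.1 (lt_of_le_of_ne hle (Ne.symm ht))
  exact ht (σ.injective (mem_fixingFrom.1 hσ _ hgt))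

theorem swap_mul_mem_fixingFrom {σ : Perm (Fin d)} {t : Fin d} (hσ : σ ∈ fixingFrom d (t + 1)) :
    swap t (σ t) * σ ∈ fixingFrom d t := mem_fixingFrom.2 fun x hx => by
  rcases hx.eq_or_lt with hx | hx
  · obtain rfl : x = t := Fin.ext hx.symm
    simp
  · have hσx := mem_fixingFrom.1 hσ x hx
    rw [Perm.mul_apply, hσx]
    exact swap_apply_of_ne_of_ne (Fin.ne_of_gt hx) fun h =>
      Fin.ne_of_gt hx (σ.injective (hσx.trans h))

theorem exists_step_mul_eq_swap_mul {P : Perm (Fin d)} {t y : Fin d} (hP : P ∈ fixingFrom d t)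
    (hy : y < t) : ∃ s : Step d, colour s = t ∧ P * stepPerm s = swap y t * P := by
  have hfix := mem_fixingFrom.1 hP
  have hx : P⁻¹ y < t := by
    by_contra! hle
    have := hfix _ hle
    simp only [Perm.coe_inv, apply_symm_apply] at this
    exact absurd (this ▸ hle) (not_le.2 hy)
  refine ⟨⟨(P⁻¹ y, t), hx⟩, rfl, ?_⟩
  have := swap_apply_apply P (P⁻¹ y) t
  rw [Perm.coe_inv, apply_symm_apply, hfix t le_rfl] at this
  simp [stepPerm, this]

def blocksBelow (k : ℕ) (m : Fin d → List (Step d)) : List (Step d) :=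
  ((List.finRange d).take k).flatMap m

theorem blocksBelow_self (m : Fin d → List (Step d)) : blocksBelow d m = joinBlocks m := by
  rw [blocksBelow, List.take_of_length_le (by simp), joinBlocks]

theorem blocksBelow_succ {k : ℕ} (hk : k < d) (m : Fin d → List (Step d)) :
    blocksBelow (k + 1) m = blocksBelow k m ++ m ⟨k, hk⟩ := by
  simp [blocksBelow, List.take_add_one, hk]

theorem blocksBelow_congr {k : ℕ} {m m' : Fin d → List (Step d)}
    (h : ∀ c : Fin d, c.val < k → m c = m' c) : blocksBelow k m = blocksBelow k m' :=
  List.flatMap_congr fun c hc => h c (List.val_lt_of_mem_take_finRange hc)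

theorem walkProd_blocksBelow_mem {m : Fin d → List (Step d)} (hm : IsColourBlocks m) (k : ℕ) :
    walkProd (blocksBelow k m) ∈ fixingFrom d k := by
  refine walkProd_mem fun s hs => stepPerm_mem_fixingFrom ?_
  obtain ⟨c, hc, hsc⟩ := List.mem_flatMap.1 hs
  exact hm c s hsc ▸ List.val_lt_of_mem_take_finRange hc

theorem exists_insertChoice_blocksBelow {m : Fin d → List (Step d)} (hm : IsColourBlocks m) :
    ∀ {k : ℕ}, k ≤ d → ∀ {σ : Perm (Fin d)}, σ ∈ fixingFrom d k →
      ∃ o, IsColourChoice o ∧ (∀ c : Fin d, k ≤ c.val → o c = none) ∧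
        walkProd (blocksBelow k (insertChoice o m)) = σ * walkProd (blocksBelow k m) ∧
        #(chosen o) = σ.absLength
  | 0, _, σ, hσ => by
    obtain rfl : σ = 1 := Perm.ext fun x => mem_fixingFrom.1 hσ x (Nat.zero_le _)
    exact ⟨fun _ => none, fun _ _ h => by simp at h, fun _ _ => rfl, by simp [blocksBelow],
      by simp [chosen]⟩
  | k + 1, hk, σ, hσ => by
    simp only [blocksBelow_succ hk, walkProd_append]
    set t : Fin d := ⟨k, hk⟩
    set Q := walkProd (blocksBelow k m)
    have hQ : Q ∈ fixingFrom d k := walkProd_blocksBelow_mem hm k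
    by_cases hσt : σ t = t
    · have hσ' : σ ∈ fixingFrom d k := by
        simpa [hσt, ← Perm.one_def] using swap_mul_mem_fixingFrom (t := t) hσ
      obtain ⟨o, ho, hnone, hprod, hcard⟩ := exists_insertChoice_blocksBelow hm (by omega) hσ'
      refine ⟨o, ho, fun c hc => hnone c (by omega), ?_, hcard⟩
      rw [hprod, show insertChoice o m t = m t by simp [insertChoice, hnone t le_rfl], mul_assoc]
    · set σ' := swap t (σ t) * σ
      have hσ' : σ' ∈ fixingFrom d k := swap_mul_mem_fixingFrom (t := t) hσ
      obtain ⟨o', ho', hnone, hprod, hcard⟩ := exists_insertChoice_blocksBelow hm (by omega) hσ'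
      obtain ⟨s, hs, hPs⟩ := exists_step_mul_eq_swap_mul (mul_mem hσ' hQ)
        (apply_lt_of_mem_fixingFrom hσ hσt)
      refine ⟨Function.update o' t (some s), ho'.update hs, fun c hc => ?_, ?_, ?_⟩
      · rw [Function.update_of_ne (Fin.ne_of_gt (show t < c from hc))]
        exact hnone c (by omega)
      · have hbelow : blocksBelow k (insertChoice (Function.update o' t (some s)) m) =
            blocksBelow k (insertChoice o' m) := blocksBelow_congr fun c hc => by
          simp [insertChoice, Function.update_of_ne (Fin.ne_of_lt (show c < t from hc))]
        rw [hbelow, hprod, show insertChoice (Function.update o' t (some s)) m t = s :: m t by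
          simp [insertChoice], walkProd_cons, ← mul_assoc (σ' * Q), hPs]
        simp [σ', swap_comm, mul_assoc]
      · rw [card_chosen_update (hnone t le_rfl), hcard, Perm.absLength_swap_mul_add_one hσt]

theorem exists_insertChoice {m : Fin d → List (Step d)} (hm : IsColourBlocks m) (σ : Perm (Fin d)) :
    ∃ o, IsColourChoice o ∧
      walkProd (joinBlocks (insertChoice o m)) = σ * walkProd (joinBlocks m) ∧
      #(chosen o) = σ.absLength := by
  obtain ⟨o, ho, -, hprod, hcard⟩ := exists_insertChoice_blocksBelow hm le_rfl
    (mem_fixingFrom.2 fun x hx => absurd x.2 (not_lt.2 hx))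
  exact ⟨o, ho, by simpa [blocksBelow_self] using hprod, hcard⟩

theorem HasCycleType.card_parts_add_absLength {ρ : Perm (Fin d)} {α : d.Partition}
    (h : HasCycleType ρ α) : α.parts.card + ρ.absLength = d := by
  have hsupp : #ρ.support ≤ d := by simpa using card_le_univ ρ.support
  have := ρ.card_cycleType_le_card_support
  rw [h, Multiset.card_add, Multiset.card_replicate, Perm.absLength]
  omega

theorem HasCycleType.unique {ρ : Perm (Fin d)} {α α' : d.Partition} (h : HasCycleType ρ α)
    (h' : HasCycleType ρ α') : α = α' :=
  Nat.Partition.ext (Eq.trans h (Eq.symm h'))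

theorem hasCycleType_one : HasCycleType (1 : Perm (Fin d)) (onesPartition d) := by
  simp [HasCycleType, onesPartition]

@[simp] theorem card_parts_onesPartition : (onesPartition d).parts.card = d := by
  simp [onesPartition]

theorem TransitiveVia.of_subset_closure {S T : Set (Perm (Fin d))} (hS : TransitiveVia S)
    (hST : S ⊆ Subgroup.closure T) : TransitiveVia T := fun x y => by
  obtain ⟨g, hg, hgxy⟩ := hS x y
  exact ⟨g, (Subgroup.closure_le _).2 hST hg, hgxy⟩

theorem monotone_colour_iff_pairwise {r : ℕ} {W : Fin r → Step d} :
    (Monotone fun j => colour (W j)) ↔ (List.ofFn W).Pairwise (colour · ≤ colour ·) := by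
  rw [← List.sortedLE_ofFn_iff, List.sortedLE_iff_pairwise, ← List.pairwise_map (f := colour),
    List.map_ofFn]
  rfl

theorem walkProd_mem_closure {l l' : List (Step d)} (h : l ⊆ l') :
    walkProd l ∈ Subgroup.closure (stepPerm '' {s | s ∈ l'}) :=
  walkProd_mem fun s hs => Subgroup.subset_closure ⟨s, h hs, rfl⟩

def MonotoneWalks (d g : ℕ) (α β : d.Partition) : Type :=
  {p : Perm (Fin d) × (Fin (2 * g + α.parts.card + β.parts.card - 2) → Step d) //
    HasCycleType p.1 α ∧ HasCycleType (p.1 * stepProd p.2) β ∧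
    (Monotone fun j => colour (p.2 j)) ∧
    TransitiveVia ({p.1} ∪ Set.range fun j => stepPerm (p.2 j))}

instance (g : ℕ) (α β : d.Partition) : Finite (MonotoneWalks d g α β) := by
  unfold MonotoneWalks; infer_instance

theorem monotoneHurwitz_eq_card (g : ℕ) (α β : d.Partition) :
    monotoneHurwitz d g α β = Nat.card (MonotoneWalks d g α β) := rfl

def walkKey {g : ℕ} (x : Σ α β : d.Partition, MonotoneWalks d g α β) :
    Perm (Fin d) × (Fin d → List (Step d)) :=
  (x.2.2.1.1, colourBlocks (List.ofFn x.2.2.1.2))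

theorem walkKey_injective (g : ℕ) : Function.Injective (walkKey (d := d) (g := g)) := by
  intro x x' h
  obtain ⟨α, β, ⟨⟨ρ, W⟩, hα, hβ, hmono, _⟩⟩ := x
  obtain ⟨α', β', ⟨⟨ρ', W'⟩, hα', hβ', hmono', _⟩⟩ := x'
  obtain ⟨hρ, hblocks⟩ := Prod.mk.inj h
  dsimp only at hρ hblocks hα hβ hmono hα' hβ' hmono'
  subst hρ
  have hW : List.ofFn W = List.ofFn W' := by
    rw [← joinBlocks_colourBlocks (monotone_colour_iff_pairwise.1 hmono), hblocks,
      joinBlocks_colourBlocks (monotone_colour_iff_pairwise.1 hmono')]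
  obtain rfl := HasCycleType.unique hα hα'
  rw [stepProd_eq_walkProd, ← hW, ← stepProd_eq_walkProd] at hβ'
  obtain rfl := HasCycleType.unique hβ hβ'
  obtain rfl := List.ofFn_injective hW
  rfl

def decodeLoop (S₁ S₂ : Finset (Fin d)) (l : List (Step d)) :
    Perm (Fin d) × (Fin d → List (Step d)) :=
  let m₁ := dropFirst S₂ (colourBlocks l)
  let m := dropFirst S₁ m₁
  (walkProd (joinBlocks m₁) * (walkProd (joinBlocks m))⁻¹, m)

theorem exists_monotoneWalks_one {g : ℕ} {m : Fin d → List (Step d)} (hm : IsColourBlocks m)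
    (hprod : walkProd (joinBlocks m) = 1) (hlen : (joinBlocks m).length = 2 * g + d + d - 2)
    (htrans : TransitiveVia (stepPerm '' {s | s ∈ joinBlocks m})) :
    ∃ w : MonotoneWalks d g (onesPartition d) (onesPartition d),
      List.ofFn w.1.2 = joinBlocks m := by
  obtain ⟨W, hW⟩ := List.exists_ofFn_eq (n := 2 * g + (onesPartition d).parts.card +
    (onesPartition d).parts.card - 2) (by simpa using hlen)
  refine ⟨⟨(1, W), hasCycleType_one, ?_,
    monotone_colour_iff_pairwise.2 (hW ▸ hm.pairwise_joinBlocks),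
    TransitiveVia.of_subset_closure htrans ?_⟩, hW⟩
  · rw [stepProd_eq_walkProd, hW, hprod, mul_one]
    exact hasCycleType_one
  · rintro _ ⟨s, hs, rfl⟩
    obtain ⟨j, rfl⟩ := List.mem_ofFn.1 (hW ▸ hs)
    exact Subgroup.subset_closure (Or.inr ⟨j, rfl⟩)

theorem exists_decodeLoop_eq_walkKey {g : ℕ} (hd : d ≠ 0)
    (x : Σ α β : d.Partition, MonotoneWalks d g α β) :
    ∃ y : Finset (Fin d) × Finset (Fin d) × MonotoneWalks d g (onesPartition d) (onesPartition d),
      decodeLoop y.1 y.2.1 (List.ofFn y.2.2.1.2) = walkKey x := by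
  obtain ⟨α, β, ⟨⟨ρ, W⟩, hα, hβ, hmono, htrans⟩⟩ := x
  dsimp only at hα hβ hmono htrans
  set m := colourBlocks (List.ofFn W)
  have hm : IsColourBlocks m := isColourBlocks_colourBlocks _
  have hjoin : joinBlocks m = List.ofFn W :=
    joinBlocks_colourBlocks (monotone_colour_iff_pairwise.1 hmono)
  obtain ⟨o₁, ho₁, hprod₁, hcard₁⟩ := exists_insertChoice hm ρ
  set m₁ := insertChoice o₁ m
  obtain ⟨o₂, ho₂, hprod₂, hcard₂⟩ :=
    exists_insertChoice (hm.insertChoice ho₁) (ρ * stepProd W)⁻¹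
  set m₂ := insertChoice o₂ m₁
  have hsub₁ : joinBlocks m₁ ⊆ joinBlocks m₂ := joinBlocks_subset_insertChoice o₂ m₁
  have hsub : joinBlocks m ⊆ joinBlocks m₂ :=
    List.Subset.trans (joinBlocks_subset_insertChoice o₁ m) hsub₁
  have hρ : walkProd (joinBlocks m₁) * (walkProd (joinBlocks m))⁻¹ = ρ := by
    rw [hprod₁, mul_inv_cancel_right]
  have hlen : (joinBlocks m₂).length = 2 * g + d + d - 2 := by
    have := HasCycleType.card_parts_add_absLength hα
    have := HasCycleType.card_parts_add_absLength hβ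
    -- both partitions have a part, so the truncated `- 2` in the walk lengths is exact
    have := α.card_parts_pos hd
    have := β.card_parts_pos hd
    rw [length_joinBlocks_insertChoice, length_joinBlocks_insertChoice, hjoin, List.length_ofFn,
      hcard₁, hcard₂, Perm.absLength_inv]
    omega
  have htrans₂ : TransitiveVia (stepPerm '' {s | s ∈ joinBlocks m₂}) := by
    refine TransitiveVia.of_subset_closure htrans (Set.union_subset ?_ ?_)
    · rw [Set.singleton_subset_iff, ← hρ]
      exact mul_mem (walkProd_mem_closure hsub₁) (inv_mem (walkProd_mem_closure hsub))
    · rintro _ ⟨j, rfl⟩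
      exact Subgroup.subset_closure ⟨W j, hsub (hjoin ▸ List.mem_ofFn.2 ⟨j, rfl⟩), rfl⟩
  obtain ⟨w, hw⟩ := exists_monotoneWalks_one ((hm.insertChoice ho₁).insertChoice ho₂)
    (by rw [hprod₂, hprod₁, hjoin, ← stepProd_eq_walkProd, inv_mul_cancel]) hlen htrans₂
  refine ⟨(chosen o₁, chosen o₂, w), ?_⟩
  simp only [decodeLoop, hw, ((hm.insertChoice ho₁).insertChoice ho₂).colourBlocks_joinBlocks,
    m₁, dropFirst_chosen_insertChoice, hρ]
  rfl

end MonotoneHurwitz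

open MonotoneHurwitz in
/-- The sum over all pairs of partitions of `d` of the monotone double Hurwitz
numbers is at most `4^d` times the monotone simple Hurwitz number
`H⃗_g(1^d, 1^d)`. -/
theorem stmt12 (d g : ℕ) (hd : 1 ≤ d) :
    ∑ α : d.Partition, ∑ β : d.Partition, monotoneHurwitz d g α β ≤
      4 ^ d * monotoneHurwitz d g (onesPartition d) (onesPartition d) := by
  choose encode hencode using exists_decodeLoop_eq_walkKey (g := g) (Nat.one_le_iff_ne_zero.1 hd)
  have hinj : Function.Injective encode := fun x x' h =>
    walkKey_injective g (by rw [← hencode x, ← hencode x', h])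
  calc ∑ α : d.Partition, ∑ β : d.Partition, monotoneHurwitz d g α β
      = Nat.card (Σ α β : d.Partition, MonotoneWalks d g α β) := by
        simp only [Nat.card_sigma, monotoneHurwitz_eq_card]
    _ ≤ Nat.card (Finset (Fin d) × Finset (Fin d) ×
          MonotoneWalks d g (onesPartition d) (onesPartition d)) :=
        Nat.card_le_card_of_injective encode hinj
    _ = 4 ^ d * monotoneHurwitz d g (onesPartition d) (onesPartition d) := by
        simp only [Nat.card_prod, Nat.card_eq_fintype_card, Fintype.card_finset, Fintype.card_fin,
          monotoneHurwitz_eq_card]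
        rw [← mul_assoc, ← mul_pow]
        norm_num
end
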